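/- Let H be a Hermitian matrix and let S(δ) be a unitary-valued function with ‖exp(-iδH) - S(δ)‖ ≤ C·δ^{p+1} for all δ ∈ [0, δ₀], where ‖·‖ is the operator norm. Write S(δ) = exp(-iδ H̃(δ)) for an effective Hermitian H̃(δ) (with spectrum in (-π/δ, π/δ]). Then the smallest eigenvalues satisfy |λ_min(H) - λ_min(H̃(δ))| ≤ C'·δ^p for a constant C' depending only on C, provided δ is sufficiently small that the spectral ranges avoid wraparound. -/

import Mathlib

/-!
Diagonalise both propagators: `exp (-iδH) = U diag (e^{-iδλᵢ}) U*` and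
`S δ = exp (-iδH̃) = V diag (e^{-iδμⱼ}) V*`. For normal matrices every eigenvalue of one lies
within the operator-norm distance of the other's spectrum (Bauer–Fike), so each phase `e^{-iδλᵢ}`
is within `Cδ^{p+1}` of some `e^{-iδμⱼ}` and vice versa. Once `δ‖H‖ ≤ π/2`, the wraparound
condition `δμⱼ ∈ (-π, π]` keeps `|δλᵢ - δμⱼ| ≤ 3π/2`, and a chord of length `Cδ^{p+1} ≤ 1`
then forces `|δλᵢ - δμⱼ| ≤ π`, where `|e^{ia} - e^{ib}| ≥ (2/π)|a - b|` gives
`|λᵢ - μⱼ| ≤ (π/2) C δ^p`. Matching the spectra in both directions compares their minima.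
-/

open Matrix Real
open scoped Matrix.Norms.L2Operator

lemma abs_le_pi_div_two_mul_norm_exp_I_mul_ofReal_sub_one {x : ℝ} (hx : |x| ≤ 3 * π / 2)
    (h : ‖Complex.exp (Complex.I * x) - 1‖ ≤ 1) :
    |x| ≤ π / 2 * ‖Complex.exp (Complex.I * x) - 1‖ := by
  have hsin : |sin (x / 2)| = sin (|x| / 2) := by
    rw [abs_sin_eq_sin_abs_of_abs_le_pi (by rw [abs_div, abs_two]; linarith [pi_pos]), abs_div,
      abs_two]
  rw [Complex.norm_exp_I_mul_ofReal_sub_one, norm_mul, Real.norm_two, Real.norm_eq_abs,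
    hsin] at h ⊢
  rcases le_or_gt |x| π with hxπ | hxπ
  · have := mul_le_sin (x := |x| / 2) (by positivity) (by linarith)
    field_simp at this ⊢
    linarith
  · -- beyond `π` the chord exceeds `2 sin (3π / 4) > 1`
    have hlt : 2 / π * (π - |x| / 2) < sin (|x| / 2) :=
      sin_pi_sub (|x| / 2) ▸ mul_lt_sin (by linarith) (by linarith)
    have hquarter : 1 / 2 ≤ 2 / π * (π - |x| / 2) := by
      have := pi_pos
      field_simp
      linarith
    linarith

lemma abs_sub_le_pi_div_two_mul_norm_exp_I_mul_sub {a b : ℝ} (hab : |a - b| ≤ 3 * π / 2)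
    (h : ‖Complex.exp (Complex.I * a) - Complex.exp (Complex.I * b)‖ ≤ 1) :
    |a - b| ≤ π / 2 * ‖Complex.exp (Complex.I * a) - Complex.exp (Complex.I * b)‖ := by
  have hfactor : Complex.exp (Complex.I * a) - Complex.exp (Complex.I * b) =
      Complex.exp (Complex.I * b) * (Complex.exp (Complex.I * ↑(a - b)) - 1) := by
    rw [mul_sub, mul_one, ← Complex.exp_add]; push_cast; ring_nf
  rw [hfactor, norm_mul, Complex.norm_exp_I_mul_ofReal, one_mul] at h ⊢
  exact abs_le_pi_div_two_mul_norm_exp_I_mul_ofReal_sub_one hab h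

lemma mul_abs_sub_le_of_norm_exp_neg_I_mul_sub_le {δ x y ε : ℝ} (hδ : 0 ≤ δ)
    (hx : |δ * x| ≤ π / 2) (hy : |δ * y| ≤ π) (hε : ε ≤ 1)
    (h : ‖Complex.exp (-(Complex.I * δ) * x) - Complex.exp (-(Complex.I * δ) * y)‖ ≤ ε) :
    δ * |x - y| ≤ π / 2 * ε := by
  have hexp : ∀ z : ℝ,
      Complex.exp (-(Complex.I * δ) * z) = Complex.exp (Complex.I * ↑(-(δ * z))) := by
    intro z; push_cast; ring_nf
  have hangle : |-(δ * x) - -(δ * y)| ≤ 3 * π / 2 := calc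
    |-(δ * x) - -(δ * y)| ≤ |δ * x| + |δ * y| := by
      simpa only [abs_neg] using abs_sub (-(δ * x)) (-(δ * y))
    _ ≤ 3 * π / 2 := by linarith
  rw [hexp, hexp] at h
  have hchord := abs_sub_le_pi_div_two_mul_norm_exp_I_mul_sub hangle (h.trans hε)
  rw [neg_sub_neg, ← mul_sub, abs_mul, abs_of_nonneg hδ, abs_sub_comm] at hchord
  grw [hchord, h]

lemma Finset.abs_inf'_sub_inf'_le {ι κ : Type*} {s : Finset ι} {t : Finset κ} (hs : s.Nonempty)
    (ht : t.Nonempty) {f : ι → ℝ} {g : κ → ℝ} {r : ℝ}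
    (hfg : ∀ i ∈ s, ∃ j ∈ t, |f i - g j| ≤ r) (hgf : ∀ j ∈ t, ∃ i ∈ s, |f i - g j| ≤ r) :
    |s.inf' hs f - t.inf' ht g| ≤ r := by
  obtain ⟨i₀, hi₀, hfi₀⟩ := s.exists_mem_eq_inf' hs f
  obtain ⟨j₀, hj₀, hgj₀⟩ := t.exists_mem_eq_inf' ht g
  obtain ⟨j, hj, hij⟩ := hfg i₀ hi₀
  obtain ⟨i, hi, hji⟩ := hgf j₀ hj₀
  have := s.inf'_le f hi
  have := t.inf'_le g hj
  rw [abs_sub_le_iff] at *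
  constructor <;> linarith

section

variable {m : Type*} [Fintype m] [DecidableEq m]

lemma exists_norm_mul_le_norm_toEuclideanCLM_diagonal [Nonempty m] (c : m → ℂ)
    (w : EuclideanSpace ℂ m) : ∃ j, ‖c j‖ * ‖w‖ ≤ ‖toEuclideanCLM (𝕜 := ℂ) (diagonal c) w‖ := by
  obtain ⟨j, -, hj⟩ := Finset.univ.exists_min_image (‖c ·‖) Finset.univ_nonempty
  refine ⟨j, (sq_le_sq₀ (by positivity) (by positivity)).mp ?_⟩
  rw [mul_pow, EuclideanSpace.norm_sq_eq, EuclideanSpace.norm_sq_eq, Finset.mul_sum]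
  refine Finset.sum_le_sum fun k _ ↦ ?_
  rw [ofLp_toEuclideanCLM, mulVec_diagonal, norm_mul, mul_pow]
  gcongr
  exact hj k (Finset.mem_univ k)

-- Bauer–Fike for normal matrices: `(V* U) eᵢ` is an approximate eigenvector of `diagonal e`
-- for the value `d i`.
lemma exists_norm_sub_le_norm_unitary_conj_diagonal_sub [Nonempty m] {U V : Matrix m m ℂ}
    (hU : U ∈ unitaryGroup m ℂ) (hV : V ∈ unitaryGroup m ℂ) (d e : m → ℂ) (i : m) :
    ∃ j, ‖d i - e j‖ ≤ ‖U * diagonal d * star U - V * diagonal e * star V‖ := by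
  set W := star V * U
  have hW : W ∈ unitaryGroup m ℂ := Submonoid.mul_mem _ (Unitary.star_mem hV) hU
  have hconj : star V * (U * diagonal d * star U - V * diagonal e * star V) * U =
      W * diagonal d - diagonal e * W := by
    simp only [W, mul_sub, sub_mul, ← mul_assoc, Unitary.star_mul_self_of_mem hV, one_mul]
    simp only [mul_assoc, Unitary.star_mul_self_of_mem hU, mul_one]
  set s : EuclideanSpace ℂ m := EuclideanSpace.single i 1
  set w := toEuclideanCLM (𝕜 := ℂ) W s
  have hs : ‖s‖ = 1 := by simp [s]
  have hw : ‖w‖ = 1 := by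
    rw [ContinuousLinearMap.norm_map_of_mem_unitary (Unitary.map_mem _ hW), hs]
  have hcol : toEuclideanCLM (𝕜 := ℂ) (W * diagonal d - diagonal e * W) s =
      toEuclideanCLM (𝕜 := ℂ) (diagonal fun j ↦ d i - e j) w := by
    have hdiag : toEuclideanCLM (𝕜 := ℂ) (diagonal d) s = d i • s := by
      ext k
      by_cases hk : k = i <;> simp [s, ofLp_toEuclideanCLM, mulVec_diagonal, hk]
    have hsub : (diagonal fun j ↦ d i - e j) = d i • (1 : Matrix m m ℂ) - diagonal e := by
      ext j k; by_cases hjk : j = k <;> simp [hjk]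
    simp [hsub, hdiag, w]
  obtain ⟨j, hj⟩ := exists_norm_mul_le_norm_toEuclideanCLM_diagonal (fun j ↦ d i - e j) w
  refine ⟨j, ?_⟩
  calc ‖d i - e j‖ ≤ ‖toEuclideanCLM (𝕜 := ℂ) (W * diagonal d - diagonal e * W) s‖ := by
        rw [hcol]; simpa only [hw, mul_one] using hj
    _ ≤ ‖W * diagonal d - diagonal e * W‖ := by
        simpa only [hs, mul_one, cstar_norm_def] using
          (toEuclideanCLM (𝕜 := ℂ) (W * diagonal d - diagonal e * W)).le_opNorm s
    _ = _ := by
        rw [← hconj, CStarRing.norm_mul_mem_unitary _ hU,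
          CStarRing.norm_mem_unitary_mul _ (Unitary.star_mem hV)]

lemma Matrix.IsHermitian.exp_smul_eq {A : Matrix m m ℂ} (hA : A.IsHermitian) (c : ℂ) :
    NormedSpace.exp (c • A) = (hA.eigenvectorUnitary : Matrix m m ℂ) *
      diagonal (fun i ↦ Complex.exp (c * hA.eigenvalues i)) *
      star (hA.eigenvectorUnitary : Matrix m m ℂ) := by
  set U : Matrix m m ℂ := (hA.eigenvectorUnitary : Matrix m m ℂ)
  have hUinv : U⁻¹ = star U := inv_eq_left_inv (Unitary.star_mul_self_of_mem (SetLike.coe_mem _))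
  have hsmul : c • A = U * (c • diagonal (RCLike.ofReal ∘ hA.eigenvalues)) * U⁻¹ := by
    conv_lhs => rw [hA.spectral_theorem, Unitary.conjStarAlgAut_apply]
    rw [mul_smul_comm, smul_mul_assoc, hUinv]
  rw [hsmul, exp_conj _ _ Unitary.isUnit_coe, hUinv, ← diagonal_smul, exp_diagonal]
  congr
  funext i
  simp [Complex.exp_eq_exp_ℂ]

lemma Matrix.IsHermitian.exists_norm_exp_eigenvalues_sub_le [Nonempty m] {A B : Matrix m m ℂ}
    (hA : A.IsHermitian) (hB : B.IsHermitian) (c : ℂ) (i : m) :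
    ∃ j, ‖Complex.exp (c * hA.eigenvalues i) - Complex.exp (c * hB.eigenvalues j)‖ ≤
      ‖NormedSpace.exp (c • A) - NormedSpace.exp (c • B)‖ := by
  rw [hA.exp_smul_eq, hB.exp_smul_eq]
  exact exists_norm_sub_le_norm_unitary_conj_diagonal_sub (SetLike.coe_mem _) (SetLike.coe_mem _)
    (fun i ↦ Complex.exp (c * hA.eigenvalues i)) (fun j ↦ Complex.exp (c * hB.eigenvalues j)) i

lemma Matrix.IsHermitian.abs_inf'_eigenvalues_sub_le_of_norm_exp_sub_le [Nonempty m]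
    {A B : Matrix m m ℂ} (hA : A.IsHermitian) (hB : B.IsHermitian) {δ ε : ℝ} (hδ : 0 < δ)
    (hAδ : ∀ i, |δ * hA.eigenvalues i| ≤ π / 2) (hBδ : ∀ j, |δ * hB.eigenvalues j| ≤ π)
    (hε : ε ≤ 1) (h : ‖NormedSpace.exp ((-(Complex.I * δ)) • A) -
      NormedSpace.exp ((-(Complex.I * δ)) • B)‖ ≤ ε) :
    |Finset.univ.inf' Finset.univ_nonempty hA.eigenvalues -
        Finset.univ.inf' Finset.univ_nonempty hB.eigenvalues| ≤ π / 2 * ε / δ := by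
  refine Finset.abs_inf'_sub_inf'_le _ _ (fun i _ ↦ ?_) (fun j _ ↦ ?_)
  · obtain ⟨j, hj⟩ := hA.exists_norm_exp_eigenvalues_sub_le hB _ i
    refine ⟨j, Finset.mem_univ _, (le_div_iff₀' hδ).mpr ?_⟩
    exact mul_abs_sub_le_of_norm_exp_neg_I_mul_sub_le hδ.le (hAδ i) (hBδ j) hε (hj.trans h)
  · obtain ⟨i, hi⟩ := hB.exists_norm_exp_eigenvalues_sub_le hA _ j
    rw [norm_sub_rev] at hi h
    refine ⟨i, Finset.mem_univ _, (le_div_iff₀' hδ).mpr ?_⟩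
    exact mul_abs_sub_le_of_norm_exp_neg_I_mul_sub_le hδ.le (hAδ i) (hBδ j) hε (hi.trans h)

end

theorem trotter_ground_state_bias {n : ℕ} (H : Matrix (Fin (n + 1)) (Fin (n + 1)) ℂ)
    (hH : H.IsHermitian) (p : ℕ) (C δ₀ : ℝ) (hC : 0 < C) (hδ₀ : 0 < δ₀)
    (S : ℝ → Matrix (Fin (n + 1)) (Fin (n + 1)) ℂ)
    (hApprox : ∀ δ ∈ Set.Icc (0 : ℝ) δ₀,
      ‖NormedSpace.exp ((-(Complex.I * (δ : ℂ))) • H) - S δ‖ ≤ C * δ ^ (p + 1))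
    (Ht : ℝ → Matrix (Fin (n + 1)) (Fin (n + 1)) ℂ) (hHt : ∀ δ, (Ht δ).IsHermitian)
    (hS : ∀ δ ∈ Set.Ioc (0 : ℝ) δ₀,
      S δ = NormedSpace.exp ((-(Complex.I * (δ : ℂ))) • Ht δ))
    (hspec : ∀ δ ∈ Set.Ioc (0 : ℝ) δ₀, ∀ i,
      δ * (hHt δ).eigenvalues i ∈ Set.Ioc (-Real.pi) Real.pi) :
    ∃ C' > (0 : ℝ), ∃ δ₁ ∈ Set.Ioc (0 : ℝ) δ₀, ∀ δ ∈ Set.Ioc (0 : ℝ) δ₁,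
      |Finset.univ.inf' Finset.univ_nonempty hH.eigenvalues -
          Finset.univ.inf' Finset.univ_nonempty (hHt δ).eigenvalues| ≤ C' * δ ^ p := by
  set α := hH.eigenvalues
  set δ₁ := min δ₀ (min 1 (min C⁻¹ (π / 2 / (‖α‖ + 1))))
  refine ⟨π / 2 * C, by positivity, δ₁, ⟨by positivity, min_le_left _ _⟩, ?_⟩
  rintro δ ⟨hδ, hδδ₁⟩
  simp only [δ₁, le_min_iff] at hδδ₁
  obtain ⟨hδδ₀, hδ1, hδC, hδα⟩ := hδδ₁
  have hε : C * δ ^ (p + 1) ≤ 1 := calc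
    C * δ ^ (p + 1) ≤ C * δ := by gcongr; exact pow_le_of_le_one hδ.le hδ1 (by omega)
    _ ≤ C * C⁻¹ := by gcongr
    _ = 1 := mul_inv_cancel₀ hC.ne'
  have hα : ∀ i, |δ * α i| ≤ π / 2 := fun i ↦ calc
    |δ * α i| ≤ δ * (‖α‖ + 1) := by
      rw [abs_mul, abs_of_pos hδ]; gcongr; linarith [norm_le_pi_norm α i, Real.norm_eq_abs (α i)]
    _ ≤ π / 2 := (le_div_iff₀ (by positivity)).mp hδα
  have hβ : ∀ j, |δ * (hHt δ).eigenvalues j| ≤ π := fun j ↦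
    abs_le.mpr ⟨(hspec δ ⟨hδ, hδδ₀⟩ j).1.le, (hspec δ ⟨hδ, hδδ₀⟩ j).2⟩
  have hclose := hApprox δ ⟨hδ.le, hδδ₀⟩
  rw [hS δ ⟨hδ, hδδ₀⟩] at hclose
  calc _ ≤ π / 2 * (C * δ ^ (p + 1)) / δ :=
        hH.abs_inf'_eigenvalues_sub_le_of_norm_exp_sub_le (hHt δ) hδ hα hβ hε hclose
    _ = π / 2 * C * δ ^ p := by field_simp; ring
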